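/- pioco is transitive on input-enabled premises: if A and B are input-enabled pQTSs and A ⊑_pioco B and B ⊑_pioco C, then A ⊑_pioco C. -/

import Mathlib

noncomputable section
attribute [local instance] Classical.propDecidable

structure pQTS (S L T : Type) [Fintype S] [Fintype L] [Fintype T] where
  init : S
  inputs : Set L
  delta : L
  delta_not_input : delta ∉ inputs
  src : T → S
  dist : T → L × S → ℝ
  dist_nonneg : ∀ t x, 0 ≤ dist t x
  dist_sum : ∀ t, ∑ x, dist t x = 1
  input_reactive : ∀ t (a : L) (s' : S), a ∈ inputs → 0 < dist t (a, s') →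
    ∀ (b : L) (s'' : S), b ≠ a → dist t (b, s'') = 0

variable {S L T : Type} [Fintype S] [Fintype L] [Fintype T]

/-- A step of a path: the transition (distribution) taken, the action, the target state. -/
abbrev PStep (S L T : Type) := T × L × S

/-- A finite path, stored with the most recent step first. -/
abbrev PPath (S L T : Type) := List (PStep S L T)

def lastState (A : pQTS S L T) : PPath S L T → S
  | [] => A.init
  | x :: _ => x.2.2

def ValidPath (A : pQTS S L T) : PPath S L T → Prop
  | [] => True
  | x :: π => ValidPath A π ∧ A.src x.1 = lastState A π ∧ 0 < A.dist x.1 (x.2.1, x.2.2)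

def ptrace : PPath S L T → List L
  | [] => []
  | x :: π => ptrace π ++ [x.2.1]

/-- A (partial, randomized, history-dependent) adversary: to each finite path it assigns
a distribution over the available transitions (`some t`) plus halting (`none`). -/
def IsAdversary (A : pQTS S L T) (E : PPath S L T → Option T → ℝ) : Prop :=
  (∀ π o, 0 ≤ E π o) ∧
  (∀ π t, 0 < E π (some t) → A.src t = lastState A π) ∧
  (∀ π, E π none + ∑ t, E π (some t) = 1)

/-- The path probability function `Q^E`. -/
def Qprob (A : pQTS S L T) (E : PPath S L T → Option T → ℝ) : PPath S L T → ℝ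
  | [] => 1
  | x :: π => Qprob A E π * E π (some x.1) * A.dist x.1 (x.2.1, x.2.2)

def pathsOfLength (A : pQTS S L T) : ℕ → Finset (PPath S L T)
  | 0 => {[]}
  | n + 1 => (pathsOfLength A n).biUnion
      (fun π => Finset.univ.image (fun x : PStep S L T => x :: π))

/-- The cone probability `P_H(C_σ)` of a finite trace σ under the trace distribution of `E`. -/
def traceProb (A : pQTS S L T) (E : PPath S L T → Option T → ℝ) (σ : List L) : ℝ :=
  ∑ π ∈ (pathsOfLength A σ.length).filter (fun π => ValidPath A π ∧ ptrace π = σ),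
    Qprob A E π

def haltsAfter (E : PPath S L T → Option T → ℝ) (k : ℕ) : Prop :=
  ∀ π : PPath S L T, k ≤ π.length → E π none = 1

/-- `trd A k`: trace distributions of adversaries of `A` halting after `k` steps,
represented by their cone probability functions on finite traces. -/
def trd (A : pQTS S L T) (k : ℕ) : Set (List L → ℝ) :=
  {f | ∃ E, IsAdversary A E ∧ haltsAfter E k ∧ ∀ σ, f σ = traceProb A E σ}

/-- `trdAll A`: all trace distributions of `A`. -/
def trdAll (A : pQTS S L T) : Set (List L → ℝ) :=
  {f | ∃ E, IsAdversary A E ∧ ∀ σ, f σ = traceProb A E σ}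

/-- `H ⊑_k H'` : the two trace distributions agree on all traces of length `k`. -/
def prefixTD (L : Type) (k : ℕ) (H H' : List L → ℝ) : Prop :=
  ∀ σ : List L, σ.length = k → H σ = H' σ

/-- Output continuations of `H` in `A` w.r.t. length `k`. -/
def outcont (H : List L → ℝ) (A : pQTS S L T) (k : ℕ) : Set (List L → ℝ) :=
  {H' | H' ∈ trd A (k + 1) ∧ prefixTD L k H H' ∧
    ∀ (σ : List L) (a : L), σ.length = k → a ∈ A.inputs → H' (σ ++ [a]) = 0}

def inputEnabled (A : pQTS S L T) : Prop :=
  ∀ s : S, ∀ a ∈ A.inputs, ∃ (t : T) (s' : S), A.src t = s ∧ 0 < A.dist t (a, s')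

def pioco {S1 T1 S2 T2 : Type} [Fintype S1] [Fintype T1] [Fintype S2] [Fintype T2]
    (Ai : pQTS S1 L T1) (As : pQTS S2 L T2) : Prop :=
  ∀ k : ℕ, ∀ H ∈ trd As k, outcont H Ai k ⊆ outcont H As k

def Traces (A : pQTS S L T) : Set (List L) :=
  {σ | ∃ π : PPath S L T, ValidPath A π ∧ ptrace π = σ}

/-- `out_A(σ)`: outputs (including quiescence) enabled after trace σ. -/
def outSet (A : pQTS S L T) (σ : List L) : Set L :=
  {a | a ∉ A.inputs ∧ ∃ π : PPath S L T, ValidPath A π ∧ ptrace π = σ ∧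
    ∃ (t : T) (s' : S), A.src t = lastState A π ∧ 0 < A.dist t (a, s')}

def ioco {S1 T1 S2 T2 : Type} [Fintype S1] [Fintype T1] [Fintype S2] [Fintype T2]
    (Ai : pQTS S1 L T1) (As : pQTS S2 L T2) : Prop :=
  ∀ σ ∈ Traces As, outSet Ai σ ⊆ outSet As σ

/-- A (nonprobabilistic) QTS: every occurring distribution is a Dirac distribution. -/
def IsQTS (A : pQTS S L T) : Prop :=
  ∀ t : T, ∃ x : L × S, ∀ y, A.dist t y = if y = x then 1 else 0

/-!
When `B` is input enabled, `A ⊑_pioco B` already gives `trd A k ⊆ trd B k` for all `k`; then an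
output continuation of `H` in `A` is one in `B`, hence one in `C`.

The inclusion is proved by induction on `k`. Let `E` be an adversary of `A` halting after `k + 1`
steps. Its truncation at `k` has a trace distribution in `trd B k`, and disabling the input
transitions of `E` after `k` steps gives an output continuation of it, so `A ⊑_pioco B` yields an
adversary `F` of `B` with the same trace distribution. At every trace `σ` of length `k`, `F` halts
with at least the mass that `E` puts on the traces `σ ++ [a]` with `a` an input. As `B` is input
enabled, that halting mass can be sent along input transitions of `B`, which recovers the trace
distribution of `E`.
-/

set_option linter.unusedSectionVars false

open Finset

section

variable {A : pQTS S L T} {E F : PPath S L T → Option T → ℝ}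

theorem mem_pathsOfLength (A : pQTS S L T) (n : ℕ) (π : PPath S L T) :
    π ∈ pathsOfLength A n ↔ π.length = n := by
  induction n generalizing π with
  | zero => simp [pathsOfLength]
  | succ n ih => cases π <;> simp [pathsOfLength, ih]

theorem sum_pathsOfLength_succ (A : pQTS S L T) (n : ℕ) (f : PPath S L T → ℝ) :
    ∑ π ∈ pathsOfLength A (n + 1), f π = ∑ π ∈ pathsOfLength A n, ∑ x, f (x :: π) := by
  rw [pathsOfLength, sum_biUnion]
  · exact sum_congr rfl fun π _ => sum_image fun x _ y _ h => (List.cons.inj h).1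
  · intro π _ π' _ hne
    simp only [Function.onFun, disjoint_left, mem_image]
    rintro _ ⟨x, _, rfl⟩ ⟨y, _, h⟩
    exact hne (List.cons.inj h).2.symm

def pathsWithTrace (A : pQTS S L T) (σ : List L) : Finset (PPath S L T) :=
  (pathsOfLength A σ.length).filter (fun π => ValidPath A π ∧ ptrace π = σ)

theorem length_ptrace (π : PPath S L T) : (ptrace π).length = π.length := by
  induction π with
  | nil => rfl
  | cons x π ih => simp [ptrace, ih]

theorem mem_pathsWithTrace {σ : List L} {π : PPath S L T} :
    π ∈ pathsWithTrace A σ ↔ ValidPath A π ∧ ptrace π = σ := by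
  rw [pathsWithTrace, mem_filter, mem_pathsOfLength, and_iff_right_iff_imp]
  rintro ⟨-, rfl⟩
  exact (length_ptrace π).symm

theorem length_eq_of_mem_pathsWithTrace {σ : List L} {π : PPath S L T}
    (h : π ∈ pathsWithTrace A σ) : π.length = σ.length :=
  (mem_pathsOfLength A _ π).1 (mem_filter.1 h).1

theorem traceProb_eq_sum (A : pQTS S L T) (E : PPath S L T → Option T → ℝ) (σ : List L) :
    traceProb A E σ = ∑ π ∈ pathsWithTrace A σ, Qprob A E π := rfl

theorem IsAdversary.some_eq_zero_of_src_ne (hE : IsAdversary A E) {π : PPath S L T} {t : T}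
    (h : A.src t ≠ lastState A π) : E π (some t) = 0 :=
  (not_lt.1 fun hpos => h (hE.2.1 π t hpos)).antisymm (hE.1 π (some t))

theorem IsAdversary.mul_dist_eq_zero_of_not_step (hE : IsAdversary A E) {π : PPath S L T} {t : T}
    {x : L × S} (h : ¬(A.src t = lastState A π ∧ 0 < A.dist t x)) :
    E π (some t) * A.dist t x = 0 := by
  rcases not_and_or.1 h with hsrc | hdist
  · rw [hE.some_eq_zero_of_src_ne hsrc, zero_mul]
  · rw [(not_lt.1 hdist).antisymm (A.dist_nonneg t x), mul_zero]

theorem IsAdversary.sum_some (hE : IsAdversary A E) (π : PPath S L T) :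
    ∑ t, E π (some t) = 1 - E π none :=
  eq_sub_of_add_eq' (hE.2.2 π)

theorem IsAdversary.some_eq_zero_of_none_eq_one (hE : IsAdversary A E) {π : PPath S L T}
    (h : E π none = 1) (t : T) : E π (some t) = 0 := by
  have hsum : ∑ t, E π (some t) = 0 := by rw [hE.sum_some, h, sub_self]
  exact (sum_eq_zero_iff_of_nonneg fun t _ => hE.1 π (some t)).1 hsum t (mem_univ t)

theorem Qprob_nonneg (hE : IsAdversary A E) (π : PPath S L T) : 0 ≤ Qprob A E π := by
  induction π with
  | nil => exact zero_le_one
  | cons x π ih => exact mul_nonneg (mul_nonneg ih (hE.1 _ _)) (A.dist_nonneg _ _)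

theorem traceProb_nonneg (hE : IsAdversary A E) (σ : List L) : 0 ≤ traceProb A E σ :=
  sum_nonneg fun π _ => Qprob_nonneg hE π

theorem traceProb_nil (A : pQTS S L T) (E : PPath S L T → Option T → ℝ) :
    traceProb A E [] = 1 := by
  rw [traceProb, List.length_nil, pathsOfLength, filter_singleton, if_pos ⟨trivial, rfl⟩,
    sum_singleton, Qprob]

theorem Qprob_congr {E E' : PPath S L T → Option T → ℝ} {n : ℕ}
    (h : ∀ π : PPath S L T, π.length < n → E' π = E π) {π : PPath S L T}
    (hπ : π.length ≤ n) : Qprob A E' π = Qprob A E π := by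
  induction π with
  | nil => rfl
  | cons x π ih =>
    rw [List.length_cons] at hπ
    rw [Qprob, Qprob, ih (by omega), h π (by omega)]

theorem traceProb_congr {E E' : PPath S L T → Option T → ℝ} {n : ℕ}
    (h : ∀ π : PPath S L T, π.length < n → E' π = E π) {σ : List L}
    (hσ : σ.length ≤ n) : traceProb A E' σ = traceProb A E σ :=
  sum_congr rfl fun _ hπ => Qprob_congr h ((length_eq_of_mem_pathsWithTrace hπ).trans_le hσ)

theorem Qprob_eq_zero_of_haltsAfter (hE : IsAdversary A E) {n : ℕ} (hn : haltsAfter E n) :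
    ∀ π : PPath S L T, n < π.length → Qprob A E π = 0
  | [], h => absurd h (Nat.not_lt_zero n)
  | x :: π, h => by
    rw [Qprob, hE.some_eq_zero_of_none_eq_one (hn π (Nat.lt_succ_iff.1 h)), mul_zero, zero_mul]

theorem traceProb_eq_zero_of_haltsAfter (hE : IsAdversary A E) {n : ℕ} (hn : haltsAfter E n)
    {σ : List L} (hσ : n < σ.length) : traceProb A E σ = 0 :=
  sum_eq_zero fun _ hπ =>
    Qprob_eq_zero_of_haltsAfter hE hn _ (hσ.trans_eq (length_eq_of_mem_pathsWithTrace hπ).symm)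

theorem traceProb_eq_of_haltsAfter {S' T' : Type} [Fintype S'] [Fintype T'] {B : pQTS S' L T'}
    {F : PPath S' L T' → Option T' → ℝ}
    (hE : IsAdversary A E) (hF : IsAdversary B F) {n : ℕ} (hEn : haltsAfter E n)
    (hFn : haltsAfter F n) (h : ∀ σ : List L, σ.length ≤ n → traceProb A E σ = traceProb B F σ)
    (σ : List L) : traceProb A E σ = traceProb B F σ := by
  rcases le_or_gt σ.length n with hσ | hσ
  · exact h σ hσ
  · rw [traceProb_eq_zero_of_haltsAfter hE hEn hσ, traceProb_eq_zero_of_haltsAfter hF hFn hσ]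

def labelWeight (A : pQTS S L T) (t : T) (c : L) : ℝ := ∑ s, A.dist t (c, s)

theorem sum_labelWeight (A : pQTS S L T) (t : T) : ∑ c, labelWeight A t c = 1 := by
  simp only [labelWeight]
  rw [← Fintype.sum_prod_type', A.dist_sum]

def IsInputTransition (A : pQTS S L T) (t : T) : Prop := ∃ a ∈ A.inputs, ∃ s, 0 < A.dist t (a, s)

theorem labelWeight_eq_ite_of_input {t : T} {a : L} {s : S}
    (ha : a ∈ A.inputs) (h : 0 < A.dist t (a, s)) (c : L) :
    labelWeight A t c = if c = a then 1 else 0 := by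
  have hzero : ∀ c ≠ a, labelWeight A t c = 0 := fun c hc =>
    sum_eq_zero fun s' _ => A.input_reactive t a s ha h c s' hc
  split_ifs with hc
  · rw [hc, ← sum_labelWeight A t, sum_eq_single a (fun c _ => hzero c) (absurd (mem_univ a))]
  · exact hzero c hc

theorem labelWeight_eq_zero_of_isInputTransition {t : T} {c : L}
    (ht : IsInputTransition A t) (hc : c ∉ A.inputs) : labelWeight A t c = 0 := by
  obtain ⟨a, ha, s, h⟩ := ht
  rw [labelWeight_eq_ite_of_input ha h, if_neg (ne_of_mem_of_not_mem ha hc).symm]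

theorem labelWeight_eq_zero_of_not_isInputTransition {t : T} {c : L}
    (ht : ¬IsInputTransition A t) (hc : c ∈ A.inputs) : labelWeight A t c = 0 :=
  sum_eq_zero fun s _ => (not_lt.1 fun h => ht ⟨c, hc, s, h⟩).antisymm (A.dist_nonneg t (c, s))

theorem traceProb_append_singleton (hE : IsAdversary A E) (σ : List L) (c : L) :
    traceProb A E (σ ++ [c]) =
      ∑ π ∈ pathsWithTrace A σ, Qprob A E π * ∑ t, E π (some t) * labelWeight A t c := by
  rw [traceProb, List.length_append, List.length_singleton, sum_filter, sum_pathsOfLength_succ,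
    pathsWithTrace, sum_filter]
  refine sum_congr rfl fun π _ => ?_
  have hstep : ∀ x : PStep S L T,
      (if ValidPath A (x :: π) ∧ ptrace (x :: π) = σ ++ [c] then Qprob A E (x :: π) else 0) =
        if ValidPath A π ∧ ptrace π = σ ∧ x.2.1 = c then
          Qprob A E π * (E π (some x.1) * A.dist x.1 x.2) else 0 := by
    rintro ⟨t, c', s⟩
    by_cases hs : A.src t = lastState A π ∧ 0 < A.dist t (c', s)
    · simp only [ValidPath, Qprob, ptrace, List.append_singleton_inj, hs, and_true, mul_assoc]
    · simp only [ValidPath, ptrace, hE.mul_dist_eq_zero_of_not_step hs, mul_zero, ite_self]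
      exact if_neg fun h => hs ⟨h.1.2.1, h.1.2.2⟩
  by_cases hv : ValidPath A π ∧ ptrace π = σ
  · simp only [hstep, hv, true_and, if_true, Fintype.sum_prod_type, labelWeight, mul_sum]
    refine sum_congr rfl fun t _ => ?_
    rw [sum_comm]
    simp only [sum_ite_eq', mem_univ, if_true]
  · rw [if_neg hv]
    exact sum_eq_zero fun x _ => (hstep x).trans (if_neg fun h => hv ⟨h.1, h.2.1⟩)

def haltMass (A : pQTS S L T) (E : PPath S L T → Option T → ℝ) (σ : List L) : ℝ :=
  ∑ π ∈ pathsWithTrace A σ, Qprob A E π * E π none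

theorem haltMass_nonneg (hE : IsAdversary A E) (σ : List L) : 0 ≤ haltMass A E σ :=
  sum_nonneg fun π _ => mul_nonneg (Qprob_nonneg hE π) (hE.1 π none)

theorem haltMass_eq (hE : IsAdversary A E) (σ : List L) :
    haltMass A E σ = traceProb A E σ - ∑ c, traceProb A E (σ ++ [c]) := by
  simp only [traceProb_append_singleton hE, traceProb_eq_sum, haltMass]
  rw [sum_comm, ← sum_sub_distrib]
  refine sum_congr rfl fun π _ => ?_
  simp only [← mul_sum, sum_comm (γ := L), sum_labelWeight, mul_one, hE.sum_some]
  ring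

def haltNow : PPath S L T → Option T → ℝ
  | _, none => 1
  | _, some _ => 0

theorem isAdversary_haltNow (A : pQTS S L T) : IsAdversary A haltNow :=
  ⟨fun _ o => by cases o <;> simp [haltNow], fun _ _ h => by simp [haltNow] at h,
    fun _ => by simp [haltNow]⟩

theorem haltsAfter_haltNow : haltsAfter (haltNow : PPath S L T → Option T → ℝ) 0 :=
  fun _ _ => rfl

def moveMass (E : PPath S L T → Option T → ℝ) (d : PPath S L T → T → ℝ) :
    PPath S L T → Option T → ℝ
  | π, none => E π none - ∑ t, d π t
  | π, some t => E π (some t) + d π t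

theorem isAdversary_moveMass (hE : IsAdversary A E) {d : PPath S L T → T → ℝ}
    (hnonneg : ∀ π t, 0 ≤ E π (some t) + d π t) (hle : ∀ π, ∑ t, d π t ≤ E π none)
    (hsrc : ∀ π t, 0 < d π t → A.src t = lastState A π) : IsAdversary A (moveMass E d) := by
  refine ⟨fun π o => ?_, fun π t h => ?_, fun π => ?_⟩
  · cases o with
    | none => exact sub_nonneg.2 (hle π)
    | some t => exact hnonneg π t
  · rcases (hE.1 π (some t)).lt_or_eq with hE' | hE'
    · exact hE.2.1 π t hE'
    · have h' : 0 < E π (some t) + d π t := h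
      exact hsrc π t (by rwa [← hE', zero_add] at h')
  · simp only [moveMass, sum_add_distrib]
    linarith [hE.2.2 π]

theorem moveMass_eq_of_forall_eq_zero {d : PPath S L T → T → ℝ} {π : PPath S L T}
    (h : ∀ t, d π t = 0) : moveMass E d π = E π := by
  funext o
  cases o <;> simp [moveMass, h]

def dropTransitions (E : PPath S L T → Option T → ℝ) (P : PPath S L T → T → Prop) :
    PPath S L T → Option T → ℝ :=
  moveMass E fun π t => if P π t then -E π (some t) else 0

theorem isAdversary_dropTransitions (hE : IsAdversary A E) (P : PPath S L T → T → Prop) :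
    IsAdversary A (dropTransitions E P) := by
  have hd : ∀ π t, (if P π t then -E π (some t) else 0) ≤ 0 := fun π t => by
    split_ifs
    · exact neg_nonpos.2 (hE.1 π (some t))
    · rfl
  refine isAdversary_moveMass hE (fun π t => ?_) (fun π => ?_)
    (fun π t h => absurd h (not_lt.2 (hd π t)))
  · split_ifs <;> simp [hE.1 π (some t)]
  · exact (sum_nonpos fun t _ => hd π t).trans (hE.1 π none)

theorem dropTransitions_some (E : PPath S L T → Option T → ℝ) (P : PPath S L T → T → Prop)
    (π : PPath S L T) (t : T) :
    dropTransitions E P π (some t) = if P π t then 0 else E π (some t) := by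
  simp only [dropTransitions, moveMass]
  split_ifs <;> ring

theorem dropTransitions_eq_of_forall_not (E : PPath S L T → Option T → ℝ)
    {P : PPath S L T → T → Prop} {π : PPath S L T} (h : ∀ t, ¬P π t) :
    dropTransitions E P π = E π :=
  moveMass_eq_of_forall_eq_zero fun t => if_neg (h t)

theorem IsAdversary.dropTransitions_none_eq_one (hE : IsAdversary A E)
    {P : PPath S L T → T → Prop} {π : PPath S L T} (h : ∀ t, P π t) :
    dropTransitions E P π none = 1 := by
  simp only [dropTransitions, moveMass, h, if_true, sum_neg_distrib, hE.sum_some]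
  ring

theorem traceProb_append_singleton_of_eq {E E' : PPath S L T → Option T → ℝ}
    (hE' : IsAdversary A E') {σ : List L}
    (h : ∀ π : PPath S L T, π.length < σ.length → E' π = E π) (c : L) :
    traceProb A E' (σ ++ [c]) =
      ∑ π ∈ pathsWithTrace A σ, Qprob A E π * ∑ t, E' π (some t) * labelWeight A t c := by
  rw [traceProb_append_singleton hE']
  exact sum_congr rfl fun π hπ => by rw [Qprob_congr h (length_eq_of_mem_pathsWithTrace hπ).le]

def truncate (E : PPath S L T → Option T → ℝ) (k : ℕ) : PPath S L T → Option T → ℝ :=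
  dropTransitions E fun π _ => k ≤ π.length

theorem traceProb_truncate (E : PPath S L T → Option T → ℝ) {k : ℕ}
    {σ : List L} (hσ : σ.length ≤ k) : traceProb A (truncate E k) σ = traceProb A E σ :=
  traceProb_congr (fun _ hπ => dropTransitions_eq_of_forall_not E fun _ => not_le.2 hπ) hσ

theorem traceProb_truncate_mem_trd (hE : IsAdversary A E) (k : ℕ) :
    traceProb A (truncate E k) ∈ trd A k :=
  ⟨_, isAdversary_dropTransitions hE _,
    fun _ hπ => hE.dropTransitions_none_eq_one fun _ => hπ, fun _ => rfl⟩

def dropInputsAt (A : pQTS S L T) (E : PPath S L T → Option T → ℝ) (k : ℕ) :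
    PPath S L T → Option T → ℝ :=
  dropTransitions E fun π t => π.length = k ∧ IsInputTransition A t

theorem isAdversary_dropInputsAt (hE : IsAdversary A E) (k : ℕ) :
    IsAdversary A (dropInputsAt A E k) :=
  isAdversary_dropTransitions hE _

theorem dropInputsAt_eq_of_length_ne (A : pQTS S L T) (E : PPath S L T → Option T → ℝ)
    {k : ℕ} {π : PPath S L T} (hπ : π.length ≠ k) : dropInputsAt A E k π = E π :=
  dropTransitions_eq_of_forall_not E fun _ h => hπ h.1

theorem traceProb_dropInputsAt_append (hE : IsAdversary A E) {k : ℕ} {σ : List L}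
    (hσ : σ.length = k) (c : L) :
    traceProb A (dropInputsAt A E k) (σ ++ [c]) =
      if c ∈ A.inputs then 0 else traceProb A E (σ ++ [c]) := by
  rw [traceProb_append_singleton_of_eq (isAdversary_dropInputsAt hE k)
      (fun π hπ => dropInputsAt_eq_of_length_ne A E (hπ.trans_eq hσ).ne),
    traceProb_append_singleton hE]
  have hstep : ∀ π ∈ pathsWithTrace A σ, ∀ t,
      dropInputsAt A E k π (some t) * labelWeight A t c =
        if c ∈ A.inputs then 0 else E π (some t) * labelWeight A t c := by
    intro π hπ t
    rw [dropInputsAt, dropTransitions_some, length_eq_of_mem_pathsWithTrace hπ, hσ]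
    by_cases ht : IsInputTransition A t <;> by_cases hc : c ∈ A.inputs <;>
      simp [ht, hc, labelWeight_eq_zero_of_isInputTransition,
        labelWeight_eq_zero_of_not_isInputTransition]
  split_ifs with hc
  · exact sum_eq_zero fun π hπ => by simp [hstep π hπ, hc]
  · exact sum_congr rfl fun π hπ => by simp [hstep π hπ, hc]

theorem traceProb_dropInputsAt_mem_outcont (hE : IsAdversary A E) {k : ℕ}
    (hn : haltsAfter E (k + 1)) :
    traceProb A (dropInputsAt A E k) ∈ outcont (traceProb A (truncate E k)) A k := by
  refine ⟨⟨dropInputsAt A E k, isAdversary_dropInputsAt hE k, fun π hπ => ?_, fun _ => rfl⟩,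
    fun σ hσ => ?_, fun σ a hσ ha => ?_⟩
  · rw [dropInputsAt_eq_of_length_ne A E (by omega)]
    exact hn π hπ
  · rw [traceProb_truncate E hσ.le,
      traceProb_congr (fun π hπ => dropInputsAt_eq_of_length_ne A E hπ.ne) hσ.le]
  · rw [traceProb_dropInputsAt_append hE hσ, if_pos ha]

theorem haltMass_dropInputsAt (hE : IsAdversary A E) {k : ℕ} {σ : List L}
    (hσ : σ.length = k) :
    haltMass A (dropInputsAt A E k) σ =
      haltMass A E σ + ∑ a, if a ∈ A.inputs then traceProb A E (σ ++ [a]) else 0 := by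
  have hsplit : ∀ c, (if c ∈ A.inputs then 0 else traceProb A E (σ ++ [c])) =
      traceProb A E (σ ++ [c]) - if c ∈ A.inputs then traceProb A E (σ ++ [c]) else 0 :=
    fun c => by split_ifs <;> ring
  rw [haltMass_eq (isAdversary_dropInputsAt hE k), haltMass_eq hE,
    traceProb_congr (fun π hπ => dropInputsAt_eq_of_length_ne A E hπ.ne) hσ.le]
  simp only [traceProb_dropInputsAt_append hE hσ, hsplit, sum_sub_distrib]
  ring

theorem sum_subtype_inputs_eq_sum_ite (A : pQTS S L T) (f : L → ℝ) :
    ∑ a : A.inputs, f a = ∑ a, if a ∈ A.inputs then f a else 0 := by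
  rw [← sum_filter]
  exact (sum_subtype _ (fun _ => by simp) f).symm

def IsInputSelector (A : pQTS S L T) (sel : S → A.inputs → T) : Prop :=
  ∀ s a, A.src (sel s a) = s ∧ ∃ s', 0 < A.dist (sel s a) (a, s')

theorem inputEnabled.exists_isInputSelector (hA : inputEnabled A) :
    ∃ sel, IsInputSelector A sel := by
  choose sel s' hsrc hpos using fun s (a : A.inputs) => hA s a a.2
  exact ⟨sel, fun s a => ⟨hsrc s a, s' s a, hpos s a⟩⟩

section InputMass

variable {sel : S → A.inputs → T} {w : List L → L → ℝ}

def inputMass (A : pQTS S L T) (sel : S → A.inputs → T) (w : List L → L → ℝ)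
    (π : PPath S L T) (t : T) : ℝ :=
  ∑ a : A.inputs, if sel (lastState A π) a = t then w (ptrace π) a else 0

theorem sum_inputMass_mul (π : PPath S L T) (f : T → ℝ) :
    ∑ t, inputMass A sel w π t * f t =
      ∑ a : A.inputs, w (ptrace π) a * f (sel (lastState A π) a) := by
  simp only [inputMass, sum_mul, ite_mul, zero_mul]
  rw [sum_comm]
  simp only [sum_ite_eq, mem_univ, if_true]

theorem sum_inputMass (π : PPath S L T) :
    ∑ t, inputMass A sel w π t = ∑ a, if a ∈ A.inputs then w (ptrace π) a else 0 := by
  simpa [sum_subtype_inputs_eq_sum_ite] using sum_inputMass_mul (sel := sel) (w := w) π fun _ => 1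

theorem inputMass_nonneg (hw : ∀ σ a, 0 ≤ w σ a) (π : PPath S L T) (t : T) :
    0 ≤ inputMass A sel w π t :=
  sum_nonneg fun a _ => by split_ifs <;> simp [hw]

theorem src_eq_of_inputMass_pos (hsel : IsInputSelector A sel) {π : PPath S L T} {t : T}
    (h : 0 < inputMass A sel w π t) : A.src t = lastState A π := by
  by_contra hne
  refine h.ne' (sum_eq_zero fun a _ => if_neg fun heq => hne ?_)
  rw [← heq, (hsel _ a).1]

theorem sum_inputMass_mul_labelWeight (hsel : IsInputSelector A sel) (π : PPath S L T) (c : L) :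
    ∑ t, inputMass A sel w π t * labelWeight A t c =
      if c ∈ A.inputs then w (ptrace π) c else 0 := by
  have hlabel : ∀ a : A.inputs, labelWeight A (sel (lastState A π) a) c = if c = a then 1 else 0 :=
    fun a => (hsel _ a).2.elim fun _ hs' => labelWeight_eq_ite_of_input a.2 hs' c
  simp only [sum_inputMass_mul, hlabel, mul_ite, mul_one, mul_zero]
  split_ifs with hc
  · rw [Fintype.sum_eq_single ⟨c, hc⟩ fun a ha => if_neg fun h => ha (Subtype.ext h.symm),
      if_pos rfl]
  · exact sum_eq_zero fun a _ => if_neg fun h : c = a => hc (h ▸ a.2)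

end InputMass

def addInputsAt (A : pQTS S L T) (F : PPath S L T → Option T → ℝ) (k : ℕ)
    (sel : S → A.inputs → T) (w : List L → L → ℝ) : PPath S L T → Option T → ℝ :=
  -- summed over the paths with trace `σ`, the factors `F π none / haltMass A F σ` add up to `1`
  moveMass F fun π t =>
    if π.length = k then F π none / haltMass A F (ptrace π) * inputMass A sel w π t else 0

section AddInputs

variable {k : ℕ} {sel : S → A.inputs → T} {w : List L → L → ℝ}

theorem addInputsAt_eq_of_length_ne {π : PPath S L T} (hπ : π.length ≠ k) :
    addInputsAt A F k sel w π = F π :=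
  moveMass_eq_of_forall_eq_zero fun _ => if_neg hπ

theorem isAdversary_addInputsAt (hF : IsAdversary A F) (hsel : IsInputSelector A sel)
    (hw₀ : ∀ σ a, 0 ≤ w σ a)
    (hw : ∀ σ : List L, σ.length = k → ∑ a, (if a ∈ A.inputs then w σ a else 0) ≤ haltMass A F σ) :
    IsAdversary A (addInputsAt A F k sel w) := by
  refine isAdversary_moveMass hF (fun π t => ?_) (fun π => ?_) (fun π t hd => ?_)
  · split_ifs
    · exact add_nonneg (hF.1 π _) (mul_nonneg (div_nonneg (hF.1 π _) (haltMass_nonneg hF _))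
        (inputMass_nonneg hw₀ π t))
    · simpa using hF.1 π (some t)
  · split_ifs with hπ
    · rw [← mul_sum, sum_inputMass, div_mul_eq_mul_div, mul_div_assoc]
      exact mul_le_of_le_one_right (hF.1 π none)
        (div_le_one_of_le₀ (hw _ ((length_ptrace π).trans hπ)) (haltMass_nonneg hF _))
    · simpa using hF.1 π none
  · split_ifs at hd
    · exact src_eq_of_inputMass_pos hsel (pos_of_mul_pos_right hd
        (div_nonneg (hF.1 π none) (haltMass_nonneg hF _)))
    · exact absurd hd (lt_irrefl 0)

theorem traceProb_addInputsAt_append (hF : IsAdversary A F) (hsel : IsInputSelector A sel)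
    (hw₀ : ∀ σ a, 0 ≤ w σ a)
    (hw : ∀ σ : List L, σ.length = k → ∑ a, (if a ∈ A.inputs then w σ a else 0) ≤ haltMass A F σ)
    {σ : List L} (hσ : σ.length = k) (c : L) :
    traceProb A (addInputsAt A F k sel w) (σ ++ [c]) =
      traceProb A F (σ ++ [c]) + if c ∈ A.inputs then w σ c else 0 := by
  set x := if c ∈ A.inputs then w σ c else 0
  have hstep : ∀ π ∈ pathsWithTrace A σ,
      Qprob A F π * ∑ t, addInputsAt A F k sel w π (some t) * labelWeight A t c =
        Qprob A F π * ∑ t, F π (some t) * labelWeight A t c +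
          Qprob A F π * F π none * (x / haltMass A F σ) := by
    intro π hπ
    obtain ⟨-, hπσ⟩ := mem_pathsWithTrace.1 hπ
    have hlen : π.length = k := (length_eq_of_mem_pathsWithTrace hπ).trans hσ
    simp only [addInputsAt, moveMass, hlen, if_true, add_mul, sum_add_distrib, mul_assoc,
      ← mul_sum, sum_inputMass_mul_labelWeight hsel, hπσ]
    ring
  have hx : haltMass A F σ = 0 → x = 0 := fun h0 => by
    by_cases hc : c ∈ A.inputs
    · have hle := (single_le_sum (fun a _ => by split_ifs <;> simp [hw₀]) (mem_univ c)).trans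
        ((hw σ hσ).trans h0.le)
      simp only [x, if_pos hc] at hle ⊢
      exact hle.antisymm (hw₀ σ c)
    · exact if_neg hc
  rw [traceProb_append_singleton_of_eq (isAdversary_addInputsAt hF hsel hw₀ hw)
      (fun π hπ => addInputsAt_eq_of_length_ne (hπ.trans_eq hσ).ne),
    sum_congr rfl hstep, sum_add_distrib, ← sum_mul, ← traceProb_append_singleton hF]
  change _ + haltMass A F σ * _ = _
  rcases eq_or_ne (haltMass A F σ) 0 with h0 | h0
  · rw [h0, hx h0, zero_mul]
  · rw [mul_div_cancel₀ x h0]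

theorem haltsAfter_addInputsAt (hF : haltsAfter F (k + 1)) :
    haltsAfter (addInputsAt A F k sel w) (k + 1) := fun π hπ => by
  rw [addInputsAt_eq_of_length_ne (by omega)]
  exact hF π hπ

end AddInputs

section Inclusion

variable {S' T' : Type} [Fintype S'] [Fintype T'] {B : pQTS S' L T'}

theorem trd_zero_subset (A : pQTS S L T) (B : pQTS S' L T') : trd A 0 ⊆ trd B 0 := by
  rintro H ⟨E, hE, hn, hH⟩
  refine ⟨haltNow, isAdversary_haltNow B, haltsAfter_haltNow, fun σ => ?_⟩
  rw [hH, traceProb_eq_of_haltsAfter hE (isAdversary_haltNow B) hn haltsAfter_haltNow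
    (fun σ hσ => ?_)]
  rw [List.eq_nil_of_length_eq_zero (Nat.le_zero.1 hσ), traceProb_nil, traceProb_nil]

theorem trd_succ_subset_of_pioco (hin : A.inputs = B.inputs) (hB : inputEnabled B)
    (hAB : pioco A B) {k : ℕ} (ih : trd A k ⊆ trd B k) : trd A (k + 1) ⊆ trd B (k + 1) := by
  rintro H ⟨E, hE, hn, hH⟩
  obtain ⟨⟨F, hF, hFn, hFE⟩, -, -⟩ :=
    hAB k _ (ih (traceProb_truncate_mem_trd hE k)) (traceProb_dropInputsAt_mem_outcont hE hn)
  have hdrop_le : ∀ σ : List L, σ.length ≤ k → traceProb B F σ = traceProb A E σ := fun σ hσ =>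
    (hFE σ).symm.trans (traceProb_congr (fun π hπ => dropInputsAt_eq_of_length_ne A E hπ.ne) hσ)
  have hw : ∀ σ : List L, σ.length = k →
      ∑ a, (if a ∈ B.inputs then traceProb A E (σ ++ [a]) else 0) ≤ haltMass B F σ := by
    intro σ hσ
    have hhalt : haltMass B F σ = haltMass A (dropInputsAt A E k) σ := by
      simp only [haltMass_eq hF, haltMass_eq (isAdversary_dropInputsAt hE k), hFE]
    rw [hhalt, haltMass_dropInputsAt hE hσ, ← hin]
    linarith [haltMass_nonneg hE σ]
  have hw₀ : ∀ σ c, 0 ≤ traceProb A E (σ ++ [c]) := fun σ c => traceProb_nonneg hE _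
  obtain ⟨sel, hsel⟩ := hB.exists_isInputSelector
  have hF' := isAdversary_addInputsAt hF hsel hw₀ hw
  refine ⟨_, hF', haltsAfter_addInputsAt hFn, fun σ => (hH σ).trans ?_⟩
  refine traceProb_eq_of_haltsAfter hE hF' hn (haltsAfter_addInputsAt hFn) (fun σ hσ => ?_) σ
  rcases hσ.lt_or_eq with hσ | hσ
  · rw [traceProb_congr (fun π hπ => addInputsAt_eq_of_length_ne hπ.ne) (Nat.lt_succ_iff.1 hσ),
      hdrop_le σ (Nat.lt_succ_iff.1 hσ)]
  · obtain rfl | ⟨σ, c, rfl⟩ := σ.eq_nil_or_concat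
    · exact absurd hσ (Nat.succ_ne_zero k).symm
    rw [List.concat_eq_append, List.length_append, List.length_singleton, Nat.succ_inj] at hσ
    rw [List.concat_eq_append, traceProb_addInputsAt_append hF hsel hw₀ hw hσ, ← hFE,
      traceProb_dropInputsAt_append hE hσ, hin]
    split_ifs <;> ring

theorem trd_subset_trd_of_pioco (hin : A.inputs = B.inputs) (hB : inputEnabled B)
    (hAB : pioco A B) : ∀ k, trd A k ⊆ trd B k
  | 0 => trd_zero_subset A B
  | k + 1 => trd_succ_subset_of_pioco hin hB hAB (trd_subset_trd_of_pioco hin hB hAB k)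

theorem outcont_subset_outcont (hin : A.inputs = B.inputs) {k : ℕ}
    (htrd : trd A (k + 1) ⊆ trd B (k + 1)) (H : List L → ℝ) : outcont H A k ⊆ outcont H B k :=
  fun _ ⟨hH', hpre, hinp⟩ => ⟨htrd hH', hpre, fun σ a hσ ha => hinp σ a hσ (hin ▸ ha)⟩

end Inclusion

end

theorem stmt11_general {S1 T1 S2 T2 S3 T3 : Type}
    [Fintype S1] [Fintype T1] [Fintype S2] [Fintype T2] [Fintype S3] [Fintype T3]
    (A : pQTS S1 L T1) (B : pQTS S2 L T2) (C : pQTS S3 L T3)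
    (hinAB : A.inputs = B.inputs)
    (hB : inputEnabled B)
    (hAB : pioco A B) (hBC : pioco B C) :
    pioco A C := fun k H hH =>
  (outcont_subset_outcont hinAB (trd_subset_trd_of_pioco hinAB hB hAB (k + 1)) H).trans
    (hBC k H hH)

theorem stmt11 {S1 T1 S2 T2 S3 T3 : Type}
    [Fintype S1] [Fintype T1] [Fintype S2] [Fintype T2] [Fintype S3] [Fintype T3]
    (A : pQTS S1 L T1) (B : pQTS S2 L T2) (C : pQTS S3 L T3)
    (hinAB : A.inputs = B.inputs) (hinBC : B.inputs = C.inputs)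
    (hdAB : A.delta = B.delta) (hdBC : B.delta = C.delta)
    (hA : inputEnabled A) (hB : inputEnabled B)
    (hAB : pioco A B) (hBC : pioco B C) :
    pioco A C :=
  stmt11_general A B C hinAB hB hAB hBC
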